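/- Let Ã(0), …, Ã(T) ∈ ℝ^{n×n} be entrywise nonnegative, let the entries of K̃(k;·) be nonnegative posynomials of θ ∈ ℝ^m_{>0}, let x(0) ∈ ℝ^n be entrywise nonnegative, let ℓ(k) ∈ ℝ^n be entrywise positive for k = 1, …, T+1, let ε > 0, let L : ℝ^m_{>0} → ℝ be a posynomial, and let L̄ > 0. Assume x(k;exp[z])^⊤ℓ(k) > 0 for all z ∈ ℝ^m and 1 ≤ k ≤ T+1, where x(k;θ) = (Ã(k−1)+K̃(k−1;θ))⋯(Ã(0)+K̃(0;θ))x(0). Then the feasible region of the log-transformed budget-constrained problem, { z ∈ ℝ^m : log(x(k;exp[z])^⊤ℓ(k)) < log ε for all 1 ≤ k ≤ T+1, and log L(exp[z]) ≤ log L̄ }, is a convex subset of ℝ^m. -/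

import Mathlib

/-!
In the coordinates `θ = exp z` a nonnegative posynomial becomes `∑ⱼ cⱼ exp (aⱼ ⬝ᵥ z)`, and the
logarithm of such a sum is convex by Hölder's inequality. Nonnegative posynomials are closed under
sums and products, so every coordinate of the trajectory, and hence every `x(k; θ)ᵀ ℓ(k)`, is one.
The feasible region is therefore an intersection of sublevel sets of convex functions.
-/

/-- A nonnegative posynomial on the positive orthant: a finite sum of monomials
with nonnegative coefficients and real exponents (possibly the zero function). -/
def IsNonnegPosynomial (m : ℕ) (f : (Fin m → ℝ) → ℝ) : Prop :=
  ∃ (N : ℕ) (c : Fin N → ℝ) (a : Fin N → Fin m → ℝ),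
    (∀ j, 0 ≤ c j) ∧
    ∀ v : Fin m → ℝ, (∀ i, 0 < v i) → f v = ∑ j, c j * ∏ i, (v i) ^ (a j i)

/-- A posynomial on the positive orthant: a finite nonempty sum of monomials
with positive coefficients and real exponents. -/
def IsPosynomial (m : ℕ) (f : (Fin m → ℝ) → ℝ) : Prop :=
  ∃ N : ℕ, 0 < N ∧ ∃ (c : Fin N → ℝ) (a : Fin N → Fin m → ℝ),
    (∀ j, 0 < c j) ∧
    ∀ v : Fin m → ℝ, (∀ i, 0 < v i) → f v = ∑ j, c j * ∏ i, (v i) ^ (a j i)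

/-- The state trajectory of the parametrized system
x(k+1;θ) = (Ã(k) + K̃(k;θ)) x(k;θ), x(0;θ) = x(0). -/
def paramTraj (n m : ℕ) (Atil : ℕ → Matrix (Fin n) (Fin n) ℝ)
    (Ktil : ℕ → (Fin m → ℝ) → Matrix (Fin n) (Fin n) ℝ)
    (x0 : Fin n → ℝ) : ℕ → (Fin m → ℝ) → Fin n → ℝ
  | 0, _ => x0
  | k + 1, θ => (Atil k + Ktil k θ).mulVec (paramTraj n m Atil Ktil x0 k θ)

open Real Finset

namespace IsNonnegPosynomial

variable {m : ℕ} {f g : (Fin m → ℝ) → ℝ}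

theorem const {c : ℝ} (hc : 0 ≤ c) : IsNonnegPosynomial m fun _ => c :=
  ⟨1, fun _ => c, fun _ _ => 0, fun _ => hc, fun v _ => by simp⟩

theorem add (hf : IsNonnegPosynomial m f) (hg : IsNonnegPosynomial m g) :
    IsNonnegPosynomial m fun v => f v + g v := by
  obtain ⟨N, c, a, hc, hfe⟩ := hf
  obtain ⟨N', d, b, hd, hge⟩ := hg
  refine ⟨N + N', Fin.append c d, Fin.append a b, Fin.addCases (by simpa) (by simpa), ?_⟩
  intro v hv
  simp [hfe v hv, hge v hv, Fin.sum_univ_add]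

theorem mul (hf : IsNonnegPosynomial m f) (hg : IsNonnegPosynomial m g) :
    IsNonnegPosynomial m fun v => f v * g v := by
  obtain ⟨N, c, a, hc, hfe⟩ := hf
  obtain ⟨N', d, b, hd, hge⟩ := hg
  let e := (finProdFinEquiv (m := N) (n := N')).symm
  refine ⟨N * N', fun p => c (e p).1 * d (e p).2, fun p i => a (e p).1 i + b (e p).2 i,
    fun p => mul_nonneg (hc _) (hd _), fun v hv => ?_⟩
  dsimp only
  rw [hfe v hv, hge v hv, sum_mul_sum, ← Fintype.sum_prod_type', ← e.sum_comp]
  refine Fintype.sum_congr _ _ fun p => ?_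
  simp only [rpow_add (hv _), prod_mul_distrib]
  ring

theorem sum {ι : Type*} (s : Finset ι) {F : ι → (Fin m → ℝ) → ℝ}
    (hF : ∀ j ∈ s, IsNonnegPosynomial m (F j)) :
    IsNonnegPosynomial m fun v => ∑ j ∈ s, F j v := by
  classical
  induction s using Finset.induction_on with
  | empty => simpa using const (m := m) le_rfl
  | insert x s hx ih =>
    simp only [sum_insert hx]
    exact (hF x (mem_insert_self x s)).add (ih fun j hj => hF j (mem_insert_of_mem hj))

end IsNonnegPosynomial

theorem IsPosynomial.isNonnegPosynomial {m : ℕ} {f : (Fin m → ℝ) → ℝ} (hf : IsPosynomial m f) :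
    IsNonnegPosynomial m f := by
  obtain ⟨N, -, c, a, hc, hfe⟩ := hf
  exact ⟨N, c, a, fun j => (hc j).le, hfe⟩

theorem IsPosynomial.pos {m : ℕ} {f : (Fin m → ℝ) → ℝ} (hf : IsPosynomial m f)
    {v : Fin m → ℝ} (hv : ∀ i, 0 < v i) : 0 < f v := by
  obtain ⟨N, hN, c, a, hc, hfe⟩ := hf
  rw [hfe v hv]
  exact sum_pos (fun j _ => mul_pos (hc j) (prod_pos fun i _ => rpow_pos_of_pos (hv i) _))
    ⟨⟨0, hN⟩, mem_univ _⟩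

theorem paramTraj_succ_apply {n m : ℕ} (Atil : ℕ → Matrix (Fin n) (Fin n) ℝ)
    (Ktil : ℕ → (Fin m → ℝ) → Matrix (Fin n) (Fin n) ℝ) (x0 : Fin n → ℝ) (k : ℕ)
    (θ : Fin m → ℝ) (i : Fin n) :
    paramTraj n m Atil Ktil x0 (k + 1) θ i =
      ∑ j, (Atil k i j + Ktil k θ i j) * paramTraj n m Atil Ktil x0 k θ j := by
  simp [paramTraj, Matrix.mulVec, dotProduct]

theorem paramTraj_isNonnegPosynomial {n m T : ℕ} {Atil : ℕ → Matrix (Fin n) (Fin n) ℝ}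
    {Ktil : ℕ → (Fin m → ℝ) → Matrix (Fin n) (Fin n) ℝ}
    (hA : ∀ k ≤ T, ∀ i j, 0 ≤ Atil k i j)
    (hK : ∀ k ≤ T, ∀ i j, IsNonnegPosynomial m (fun θ => Ktil k θ i j))
    {x0 : Fin n → ℝ} (hx0 : ∀ i, 0 ≤ x0 i) :
    ∀ k ≤ T + 1, ∀ i, IsNonnegPosynomial m (fun θ => paramTraj n m Atil Ktil x0 k θ i)
  | 0, _, i => .const (hx0 i)
  | k + 1, hk, i => by
    simp only [paramTraj_succ_apply]
    exact .sum _ fun j _ => ((IsNonnegPosynomial.const (hA k (by omega) i j)).add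
      (hK k (by omega) i j)).mul (paramTraj_isNonnegPosynomial hA hK hx0 k (by omega) j)

/-- Hölder's inequality with exponents `1 / t` and `1 / s`. -/
theorem Real.sum_rpow_mul_rpow_le {ι : Type*} (S : Finset ι) {u w : ι → ℝ}
    (hu : ∀ j ∈ S, 0 ≤ u j) (hw : ∀ j ∈ S, 0 ≤ w j) (hU : 0 < ∑ j ∈ S, u j)
    (hW : 0 < ∑ j ∈ S, w j) {t s : ℝ} (ht : 0 ≤ t) (hs : 0 ≤ s) (hts : t + s = 1) :
    ∑ j ∈ S, u j ^ t * w j ^ s ≤ (∑ j ∈ S, u j) ^ t * (∑ j ∈ S, w j) ^ s := by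
  set U := ∑ j ∈ S, u j
  set W := ∑ j ∈ S, w j
  have hUW : 0 ≤ U ^ t * W ^ s := by positivity
  calc ∑ j ∈ S, u j ^ t * w j ^ s
      = ∑ j ∈ S, U ^ t * W ^ s * ((u j / U) ^ t * (w j / W) ^ s) := by
        refine sum_congr rfl fun j hj => ?_
        rw [div_rpow (hu j hj) hU.le, div_rpow (hw j hj) hW.le]
        field_simp
    _ ≤ ∑ j ∈ S, U ^ t * W ^ s * (t * (u j / U) + s * (w j / W)) :=
        sum_le_sum fun j hj => mul_le_mul_of_nonneg_left (geom_mean_le_arith_mean2_weighted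
          ht hs (div_nonneg (hu j hj) hU.le) (div_nonneg (hw j hj) hW.le) hts) hUW
    _ = U ^ t * W ^ s * (t * (U / U) + s * (W / W)) := by
        rw [← mul_sum, sum_add_distrib, ← mul_sum, ← mul_sum, sum_div, sum_div]
    _ = U ^ t * W ^ s := by rw [div_self hU.ne', div_self hW.ne', mul_one, mul_one, hts, mul_one]

theorem Real.mul_exp_rpow_mul_mul_exp_rpow {c : ℝ} (hc : 0 ≤ c) (p q : ℝ) {t s : ℝ}
    (hts : t + s = 1) : (c * exp p) ^ t * (c * exp q) ^ s = c * exp (t * p + s * q) := by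
  rw [mul_rpow hc (exp_pos p).le, mul_rpow hc (exp_pos q).le, ← exp_mul, ← exp_mul,
    exp_add, mul_comm p, mul_comm q]
  calc c ^ t * exp (t * p) * (c ^ s * exp (s * q)) = c ^ (t + s) * (exp (t * p) * exp (s * q)) := by
        rw [rpow_add' hc (by simp [hts])]; ring
    _ = _ := by rw [hts, rpow_one]

theorem IsNonnegPosynomial.comp_exp_eq {m : ℕ} {f : (Fin m → ℝ) → ℝ}
    {N : ℕ} {c : Fin N → ℝ} {a : Fin N → Fin m → ℝ}
    (hfe : ∀ v : Fin m → ℝ, (∀ i, 0 < v i) → f v = ∑ j, c j * ∏ i, (v i) ^ (a j i))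
    (z : Fin m → ℝ) : f (fun i => exp (z i)) = ∑ j, c j * exp (a j ⬝ᵥ z) := by
  rw [hfe _ fun i => exp_pos _]
  refine sum_congr rfl fun j _ => ?_
  simp only [dotProduct, exp_sum, ← exp_mul, mul_comm]

theorem IsNonnegPosynomial.convexOn_log_comp_exp {m : ℕ} {f : (Fin m → ℝ) → ℝ}
    (hf : IsNonnegPosynomial m f) (hpos : ∀ z : Fin m → ℝ, 0 < f (fun i => exp (z i))) :
    ConvexOn ℝ Set.univ fun z : Fin m → ℝ => log (f fun i => exp (z i)) := by
  obtain ⟨N, c, a, hc, hfe⟩ := hf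
  refine ⟨convex_univ, fun x _ y _ t s ht hs hts => ?_⟩
  have hle : f (fun i => exp ((t • x + s • y) i))
      ≤ f (fun i => exp (x i)) ^ t * f (fun i => exp (y i)) ^ s := by
    simp only [IsNonnegPosynomial.comp_exp_eq hfe] at hpos ⊢
    convert Real.sum_rpow_mul_rpow_le univ (fun j _ => mul_nonneg (hc j) (exp_pos _).le)
      (fun j _ => mul_nonneg (hc j) (exp_pos _).le) (hpos x) (hpos y) ht hs hts using 2 with j
    rw [Real.mul_exp_rpow_mul_mul_exp_rpow (hc j) _ _ hts, dotProduct_add, dotProduct_smul,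
      dotProduct_smul, smul_eq_mul, smul_eq_mul]
  calc log (f fun i => exp ((t • x + s • y) i))
      ≤ log (f (fun i => exp (x i)) ^ t * f (fun i => exp (y i)) ^ s) :=
        log_le_log (hpos _) hle
    _ = t * log (f fun i => exp (x i)) + s * log (f fun i => exp (y i)) := by
        rw [log_mul (rpow_pos_of_pos (hpos x) _).ne' (rpow_pos_of_pos (hpos y) _).ne',
          log_rpow (hpos x), log_rpow (hpos y)]

theorem budget_constrained_feasible_region_convex_general
    (n m T : ℕ) (Atil : ℕ → Matrix (Fin n) (Fin n) ℝ)
    (Ktil : ℕ → (Fin m → ℝ) → Matrix (Fin n) (Fin n) ℝ)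
    (hA : ∀ k ≤ T, ∀ i j, 0 ≤ Atil k i j)
    (hK : ∀ k ≤ T, ∀ i j, IsNonnegPosynomial m (fun θ => Ktil k θ i j))
    (x0 : Fin n → ℝ) (hx0 : ∀ i, 0 ≤ x0 i)
    (ℓ : ℕ → Fin n → ℝ) (hℓ : ∀ k, 1 ≤ k → k ≤ T + 1 → ∀ i, 0 < ℓ k i)
    (ε : ℝ)
    (L : (Fin m → ℝ) → ℝ) (hL : IsPosynomial m L)
    (Lbar : ℝ)
    (hpos : ∀ z : Fin m → ℝ, ∀ k, 1 ≤ k → k ≤ T + 1 →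
      0 < ∑ i, paramTraj n m Atil Ktil x0 k (fun i => Real.exp (z i)) i * ℓ k i) :
    Convex ℝ
      { z : Fin m → ℝ |
        (∀ k, 1 ≤ k → k ≤ T + 1 →
          Real.log (∑ i, paramTraj n m Atil Ktil x0 k (fun i => Real.exp (z i)) i * ℓ k i)
            < Real.log ε) ∧
        Real.log (L (fun i => Real.exp (z i))) ≤ Real.log Lbar } := by
  have hstate : ∀ k, 1 ≤ k → k ≤ T + 1 → ConvexOn ℝ Set.univ fun z : Fin m → ℝ =>
      log (∑ i, paramTraj n m Atil Ktil x0 k (fun i => exp (z i)) i * ℓ k i) := fun k hk1 hk2 =>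
    (IsNonnegPosynomial.sum univ fun i _ =>
      (paramTraj_isNonnegPosynomial hA hK hx0 k hk2 i).mul (.const (hℓ k hk1 hk2 i).le)
      ).convexOn_log_comp_exp fun z => hpos z k hk1 hk2
  have hbudget := hL.isNonnegPosynomial.convexOn_log_comp_exp fun z => hL.pos fun i => exp_pos _
  intro x hx y hy t s ht hs hts
  exact ⟨fun k hk1 hk2 => ((hstate k hk1 hk2).convex_lt (log ε) ⟨trivial, hx.1 k hk1 hk2⟩
      ⟨trivial, hy.1 k hk1 hk2⟩ ht hs hts).2,
    (hbudget.convex_le (log Lbar) ⟨trivial, hx.2⟩ ⟨trivial, hy.2⟩ ht hs hts).2⟩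

/-- The feasible region of the log-transformed budget-constrained
finite-time control problem,
{ z : log(x(k;exp[z])^⊤ℓ(k)) < log ε for all 1 ≤ k ≤ T+1, log L(exp[z]) ≤ log L̄ },
is a convex subset of ℝ^m. -/
theorem budget_constrained_feasible_region_convex
    (n m T : ℕ) (Atil : ℕ → Matrix (Fin n) (Fin n) ℝ)
    (Ktil : ℕ → (Fin m → ℝ) → Matrix (Fin n) (Fin n) ℝ)
    (hA : ∀ k ≤ T, ∀ i j, 0 ≤ Atil k i j)
    (hK : ∀ k ≤ T, ∀ i j, IsNonnegPosynomial m (fun θ => Ktil k θ i j))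
    (x0 : Fin n → ℝ) (hx0 : ∀ i, 0 ≤ x0 i)
    (ℓ : ℕ → Fin n → ℝ) (hℓ : ∀ k, 1 ≤ k → k ≤ T + 1 → ∀ i, 0 < ℓ k i)
    (ε : ℝ) (hε : 0 < ε)
    (L : (Fin m → ℝ) → ℝ) (hL : IsPosynomial m L)
    (Lbar : ℝ) (hLbar : 0 < Lbar)
    (hpos : ∀ z : Fin m → ℝ, ∀ k, 1 ≤ k → k ≤ T + 1 →
      0 < ∑ i, paramTraj n m Atil Ktil x0 k (fun i => Real.exp (z i)) i * ℓ k i) :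
    Convex ℝ
      { z : Fin m → ℝ |
        (∀ k, 1 ≤ k → k ≤ T + 1 →
          Real.log (∑ i, paramTraj n m Atil Ktil x0 k (fun i => Real.exp (z i)) i * ℓ k i)
            < Real.log ε) ∧
        Real.log (L (fun i => Real.exp (z i))) ≤ Real.log Lbar } :=
  budget_constrained_feasible_region_convex_general n m T Atil Ktil hA hK x0 hx0 ℓ hℓ ε L hL Lbar
    hpos
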